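/- If n ≥ 2k+1, then the Kneser graph K(n,k) is connected. -/

import Mathlib

/-- The Kneser graph `K(n,k)`: vertices are the `k`-element subsets of an
`n`-element set, two vertices adjacent iff the corresponding subsets are disjoint. -/
def kneserGraph (n k : ℕ) : SimpleGraph {s : Finset (Fin n) // s.card = k} where
  Adj a b := a ≠ b ∧ Disjoint a.1 b.1
  symm := by
    constructor
    intro a b h
    exact ⟨h.1.symm, h.2.symm⟩
  loopless := by
    constructor
    intro a h
    exact h.1 rfl

instance (n k : ℕ) : DecidableRel (kneserGraph n k).Adj := fun a b =>
  inferInstanceAs (Decidable (a ≠ b ∧ Disjoint a.1 b.1))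

/-!
Two `k`-sets whose union has at most `n - k` elements have a common neighbour, namely any
`k`-set in the complement of their union. Exchanging one element of `a \ b` for one of `b \ a`
moves `a` to such a `k`-set `a'` (the union `a ∪ a'` has `k + 1 ≤ n - k` elements) and shrinks
`a \ b`, so induction on `#(a \ b)` joins any two vertices.
-/

open Finset

theorem Finset.exists_exchange_card_sdiff_lt {α : Type*} [DecidableEq α] {s t : Finset α}
    (hcard : #s = #t) (hst : s ≠ t) :
    ∃ s' : Finset α, #s' = #s ∧ #(s ∪ s') ≤ #s + 1 ∧ #(s' \ t) < #(s \ t) := by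
  obtain ⟨x, hx⟩ : (s \ t).Nonempty :=
    sdiff_nonempty.2 fun hsub => hst (eq_of_subset_of_card_le hsub hcard.ge)
  obtain ⟨y, hy⟩ : (t \ s).Nonempty := by
    rw [← card_pos, ← card_sdiff_comm hcard]
    exact card_pos.2 ⟨x, hx⟩
  rw [mem_sdiff] at hx hy
  refine ⟨insert y (s.erase x), ?_, ?_, ?_⟩
  · rw [card_insert_of_notMem fun h => hy.2 (mem_of_mem_erase h), card_erase_add_one hx.1]
  · refine (card_le_card fun z hz => ?_).trans (card_insert_le y s)
    simp only [mem_union, mem_insert, mem_erase] at hz ⊢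
    tauto
  · refine (card_le_card fun z hz => ?_).trans_lt (card_lt_card (erase_ssubset (mem_sdiff.2 hx)))
    simp only [mem_sdiff, mem_insert, mem_erase] at hz ⊢
    rcases hz with ⟨rfl | hz, hzt⟩
    · exact absurd hy.1 hzt
    · exact ⟨hz.1, hz.2, hzt⟩

variable {n k : ℕ}

theorem kneserGraph_adj_of_disjoint (hk : k ≠ 0) {a b : {s : Finset (Fin n) // #s = k}}
    (h : Disjoint a.1 b.1) : (kneserGraph n k).Adj a b := by
  refine ⟨fun hab => hk ?_, h⟩
  rw [← a.2, (disjoint_self_iff_empty a.1).1 (hab ▸ h), card_empty]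

theorem kneserGraph_reachable_of_card_union_add_le {a b : {s : Finset (Fin n) // #s = k}}
    (h : #(a.1 ∪ b.1) + k ≤ n) : (kneserGraph n k).Reachable a b := by
  obtain rfl | hk := eq_or_ne k 0
  · have hab : a = b := Subtype.ext <| by rw [card_eq_zero.1 a.2, card_eq_zero.1 b.2]
    exact hab ▸ .rfl
  obtain ⟨u, hu, hucard⟩ := exists_subset_card_eq (s := (a.1 ∪ b.1)ᶜ) (n := k)
    (by rw [card_compl, Fintype.card_fin]; omega)
  obtain ⟨hua, hub⟩ := disjoint_union_right.1 (subset_compl_iff_disjoint_right.1 hu)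
  let v : {s : Finset (Fin n) // #s = k} := ⟨u, hucard⟩
  exact (kneserGraph_adj_of_disjoint (b := v) hk hua.symm).reachable.trans
    (kneserGraph_adj_of_disjoint (a := v) hk hub).reachable

theorem kneserGraph_reachable (h : 2 * k + 1 ≤ n) (a b : {s : Finset (Fin n) // #s = k}) :
    (kneserGraph n k).Reachable a b := by
  by_cases hab : a = b
  · exact hab ▸ .rfl
  obtain ⟨s', hs'card, hunion, hdecr⟩ :=
    exists_exchange_card_sdiff_lt (a.2.trans b.2.symm) (Subtype.coe_injective.ne hab)
  let a' : {s : Finset (Fin n) // #s = k} := ⟨s', hs'card.trans a.2⟩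
  have hnear : #(a.1 ∪ s') + k ≤ n := by rw [a.2] at hunion; omega
  exact (kneserGraph_reachable_of_card_union_add_le (b := a') hnear).trans
    (kneserGraph_reachable h a' b)
termination_by #(a.1 \ b.1)
decreasing_by exact hdecr

/-- If `n ≥ 2k + 1`, then the Kneser graph `K(n,k)` is connected. -/
theorem kneser_connected (n k : ℕ) (h : 2 * k + 1 ≤ n) :
    (kneserGraph n k).Connected := by
  obtain ⟨s, -, hs⟩ := exists_subset_card_eq (s := (univ : Finset (Fin n))) (n := k)
    (by rw [card_univ, Fintype.card_fin]; omega)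
  have : Nonempty {s : Finset (Fin n) // #s = k} := ⟨⟨s, hs⟩⟩
  exact ⟨kneserGraph_reachable h⟩
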